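/- Let n ≥ 1 and let f, g : {0,1}ⁿ → ℂ both satisfy the even Parity Condition, with f(0ⁿ) = g(0ⁿ) = 1 and f(α) = g(α) for every α of Hamming weight 2. Suppose g satisfies all Matchgate Identities, and for every ℓ ∈ {1,…,n} the restriction f^{x_ℓ=0} satisfies all Matchgate Identities. Then f(α) = g(α) for every α ∈ {0,1}ⁿ of Hamming weight less than n. -/

import Mathlib

/-!
Pinning a coordinate where `x` vanishes to `0` reduces the claim to the restrictions of `f`
and `g` to that face of the cube, and both satisfy all Matchgate Identities. Two signatures
satisfying all Matchgate Identities, with the same nonzero value at `0` and agreeing in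
weight 2, agree everywhere: the identity with pattern `e_p` and position vector the support
of `x`, for some `p` in that support, expresses `h 0 * h x` through values of `h` in weight 2
and in weight `wt x - 2`, so induction on the weight applies.
-/

/-- The Hamming weight of `x ∈ ℤ₂ᵐ`. -/
def wt {m : ℕ} (x : Fin m → ZMod 2) : ℕ :=
  (Finset.univ.filter (fun i => x i = 1)).card

/-- The vector `e_p ∈ ℤ₂ᵐ` with a `1` in position `p` only. -/
def unitVec {m : ℕ} (p : Fin m) : Fin m → ZMod 2 := fun j => if j = p then 1 else 0

/-- The indicator vector of a position set `P`. -/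
def indVec {m : ℕ} (P : Finset (Fin m)) : Fin m → ZMod 2 := fun j => if j ∈ P then 1 else 0

/-- `h` satisfies all Matchgate Identities: for every pattern `α` and every
nonempty position vector `P = {p₁ < ⋯ < p_ℓ}`,
`∑_{i=1}^{ℓ} (-1)^i h(α ⊕ e_{pᵢ}) h(α ⊕ P ⊕ e_{pᵢ}) = 0`.
The sign `(-1)^i` for `p = pᵢ` is expressed via the rank of `p` in `P`. -/
def SatisfiesMGI {m : ℕ} (h : (Fin m → ZMod 2) → ℂ) : Prop :=
  ∀ (α : Fin m → ZMod 2) (P : Finset (Fin m)), P.Nonempty →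
    ∑ p ∈ P, (-1 : ℂ) ^ (P.filter (fun q => q ≤ p)).card *
      h (α + unitVec p) * h (α + indVec P + unitVec p) = 0

open Finset

section Hamming

variable {m : ℕ}

lemma ZMod.two_eq_zero_or_eq_one : ∀ a : ZMod 2, a = 0 ∨ a = 1 := by decide

lemma unitVec_add_self (p : Fin m) : unitVec p + unitVec p = 0 :=
  funext fun _ => CharTwo.add_self_eq_zero _

lemma unitVec_eq_indVec_singleton (p : Fin m) : unitVec p = indVec {p} := by
  ext j; simp [unitVec, indVec]

lemma indVec_filter_eq_one (x : Fin m → ZMod 2) : indVec (univ.filter (x · = 1)) = x := by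
  ext j
  rcases ZMod.two_eq_zero_or_eq_one (x j) with h | h <;> simp [indVec, h]

lemma wt_unitVec_add_unitVec {p q : Fin m} (hpq : p ≠ q) : wt (unitVec p + unitVec q) = 2 := by
  have : univ.filter (fun i => (unitVec p + unitVec q) i = 1) = {p, q} := by
    ext i
    simp only [mem_filter, mem_univ, true_and, mem_insert, mem_singleton]
    by_cases hip : i = p <;> by_cases hiq : i = q <;> simp_all [unitVec]
  rw [wt, this, card_pair hpq]

lemma wt_add_unitVec_add_unitVec_lt {x : Fin m → ZMod 2} {p q : Fin m}
    (hp : x p = 1) (hq : x q = 1) (hpq : p ≠ q) : wt (x + unitVec p + unitVec q) < wt x := by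
  refine card_lt_card ⟨fun i hi => ?_, fun hsub => ?_⟩
  · simp only [mem_filter, mem_univ, true_and] at hi ⊢
    by_cases hip : i = p <;> by_cases hiq : i = q <;> simp_all [unitVec]
  · have := hsub (by simpa using hp)
    simp only [mem_filter, mem_univ, true_and] at this
    simp [unitVec, hp, hpq] at this

lemma exists_eq_zero_of_wt_lt {x : Fin m → ZMod 2} (hx : wt x < m) : ∃ l, x l = 0 := by
  by_contra! hne
  have : univ.filter (fun i => x i = 1) = univ :=
    filter_true_of_mem fun i _ => (ZMod.two_eq_zero_or_eq_one _).resolve_left (hne i)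
  simp [wt, this] at hx

end Hamming

section Pinning

variable {m : ℕ} (l : Fin (m + 1))

lemma insertNth_zero_indVec (P : Finset (Fin m)) :
    (l.insertNth 0 (indVec P) : Fin (m + 1) → ZMod 2) = indVec (P.map l.succAboveEmb) := by
  ext j
  rcases l.eq_self_or_eq_succAbove j with rfl | ⟨i, rfl⟩
  · simp [indVec, Fin.succAbove_ne]
  · simp [indVec]

lemma insertNth_zero_unitVec (p : Fin m) :
    (l.insertNth 0 (unitVec p) : Fin (m + 1) → ZMod 2) = unitVec (l.succAbove p) := by
  simp [unitVec_eq_indVec_singleton, insertNth_zero_indVec]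

lemma wt_insertNth_zero (y : Fin m → ZMod 2) :
    wt (l.insertNth 0 y : Fin (m + 1) → ZMod 2) = wt y := by
  have : univ.filter (fun j => (l.insertNth 0 y : Fin (m + 1) → ZMod 2) j = 1)
      = (univ.filter (fun i => y i = 1)).map l.succAboveEmb := by
    ext j
    rcases l.eq_self_or_eq_succAbove j with rfl | ⟨i, rfl⟩
    · simp [Fin.succAbove_ne]
    · simp
  rw [wt, wt, this, card_map]

end Pinning

namespace SatisfiesMGI

variable {m : ℕ}

theorem comp_insertNth {h : (Fin (m + 1) → ZMod 2) → ℂ} (hm : SatisfiesMGI h)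
    (l : Fin (m + 1)) (a : ZMod 2) : SatisfiesMGI fun y => h (l.insertNth a y) := by
  intro α P hP
  have hshift (y : Fin m → ZMod 2) (p : Fin m) :
      l.insertNth a (y + unitVec p) = l.insertNth a y + unitVec (l.succAbove p) := by
    rw [← insertNth_zero_unitVec, ← Fin.insertNth_add, add_zero]
  have hrank (p : Fin m) : ((P.map l.succAboveEmb).filter (· ≤ l.succAbove p)).card
      = (P.filter (· ≤ p)).card := by
    rw [filter_map, card_map]
    congr 1
    exact filter_congr fun q _ => Fin.succAbove_le_succAbove_iff
  have key := hm (l.insertNth a α) (P.map l.succAboveEmb) hP.map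
  rw [sum_map] at key
  rw [← key]
  refine sum_congr rfl fun p _ => ?_
  dsimp only
  rw [Fin.coe_succAboveEmb, hrank, hshift, hshift, ← insertNth_zero_indVec,
    ← Fin.insertNth_add, add_zero]

theorem identity_at_unitVec {h : (Fin m → ZMod 2) → ℂ} (hm : SatisfiesMGI h)
    {x : Fin m → ZMod 2} {p : Fin m} (hp : x p = 1) :
    (-1 : ℂ) ^ ((univ.filter (x · = 1)).filter (· ≤ p)).card * h 0 * h x
      + ∑ q ∈ (univ.filter (x · = 1)).erase p,
        (-1 : ℂ) ^ ((univ.filter (x · = 1)).filter (· ≤ q)).card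
          * h (unitVec p + unitVec q) * h (x + unitVec p + unitVec q) = 0 := by
  have key := hm (unitVec p) (univ.filter (x · = 1)) ⟨p, by simpa using hp⟩
  have hxpp : x + unitVec p + unitVec p = x := by rw [add_assoc, unitVec_add_self, add_zero]
  rwa [indVec_filter_eq_one, ← add_sum_erase _ _ (by simpa using hp), unitVec_add_self,
    add_comm (unitVec p) x, hxpp] at key

theorem eq_of_forall_wt_eq_two {h₁ h₂ : (Fin m → ZMod 2) → ℂ}
    (hm₁ : SatisfiesMGI h₁) (hm₂ : SatisfiesMGI h₂) (h0 : h₁ 0 = h₂ 0) (h0_ne : h₂ 0 ≠ 0)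
    (h2 : ∀ x, wt x = 2 → h₁ x = h₂ x) : h₁ = h₂ := by
  funext x
  induction hw : wt x using Nat.strong_induction_on generalizing x with
  | _ w ih =>
  by_cases hx : x = 0
  · rw [hx, h0]
  obtain ⟨p, hp⟩ : ∃ p, x p = 1 := by
    by_contra! hne
    exact hx (funext fun i => (ZMod.two_eq_zero_or_eq_one _).resolve_right (hne i))
  set S := univ.filter (x · = 1)
  have hsum : ∑ q ∈ S.erase p, (-1 : ℂ) ^ (S.filter (· ≤ q)).card
        * h₁ (unitVec p + unitVec q) * h₁ (x + unitVec p + unitVec q)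
      = ∑ q ∈ S.erase p, (-1 : ℂ) ^ (S.filter (· ≤ q)).card
        * h₂ (unitVec p + unitVec q) * h₂ (x + unitVec p + unitVec q) :=
    sum_congr rfl fun q hq => by
      have hqp : q ≠ p := ne_of_mem_erase hq
      have hq1 : x q = 1 := by simpa [S] using mem_of_mem_erase hq
      rw [h2 _ (wt_unitVec_add_unitVec hqp.symm),
        ih _ (hw ▸ wt_add_unitVec_add_unitVec_lt hp hq1 hqp.symm) _ rfl]
  have key := (hm₁.identity_at_unitVec hp).trans (hm₂.identity_at_unitVec hp).symm
  rw [hsum, h0, add_left_inj] at key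
  exact mul_left_cancel₀ (mul_ne_zero (pow_ne_zero _ (by norm_num)) h0_ne) key

end SatisfiesMGI

theorem agree_below_top_weight_general (n : ℕ) (f g : (Fin (n + 1) → ZMod 2) → ℂ)
    (hf0 : f 0 = 1) (hg0 : g 0 = 1)
    (h2 : ∀ x, wt x = 2 → f x = g x)
    (hgMGI : SatisfiesMGI g)
    (hfMGI : ∀ l : Fin (n + 1),
      SatisfiesMGI fun y : Fin n → ZMod 2 => f (l.insertNth 0 y)) :
    ∀ x, wt x < n + 1 → f x = g x := by
  intro x hx
  obtain ⟨l, hl⟩ := exists_eq_zero_of_wt_lt hx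
  have hpinned : (fun y => f (l.insertNth 0 y)) = fun y => g (l.insertNth 0 y) :=
    (hfMGI l).eq_of_forall_wt_eq_two (hgMGI.comp_insertNth l 0) (by simp [hf0, hg0])
      (by simp [hg0]) fun y hy => h2 _ (by rwa [wt_insertNth_zero])
  simpa [← hl, Fin.insertNth_self_removeNth] using congrFun hpinned (l.removeNth x)

theorem agree_below_top_weight (n : ℕ) (f g : (Fin (n + 1) → ZMod 2) → ℂ)
    (hfpar : ∀ x, Odd (wt x) → f x = 0)
    (hgpar : ∀ x, Odd (wt x) → g x = 0)
    (hf0 : f 0 = 1) (hg0 : g 0 = 1)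
    (h2 : ∀ x, wt x = 2 → f x = g x)
    (hgMGI : SatisfiesMGI g)
    (hfMGI : ∀ l : Fin (n + 1),
      SatisfiesMGI fun y : Fin n → ZMod 2 => f (l.insertNth 0 y)) :
    ∀ x, wt x < n + 1 → f x = g x :=
  agree_below_top_weight_general n f g hf0 hg0 h2 hgMGI hfMGI
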